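/- For all feature matrices X, Y ∈ ℝ^{C×n} with columns x₁,…,x_n and y₁,…,y_n respectively, the squared Frobenius distance between their Gram matrices equals (1/C²) times the squared maximum mean discrepancy of the column empirical distributions under the second-order polynomial kernel k(a,b) = ⟨a,b⟩²; explicitly: ‖GM(X) − GM(Y)‖_F² = (1/C²) · [ (1/n²)·Σ_{i=1}^{n} Σ_{j=1}^{n} ⟨x_i, x_j⟩² − (2/n²)·Σ_{i=1}^{n} Σ_{j=1}^{n} ⟨x_i, y_j⟩² + (1/n²)·Σ_{i=1}^{n} Σ_{j=1}^{n} ⟨y_i, y_j⟩² ]. -/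
import Mathlib

/-- The (normalized) Gram matrix `GM(X) = (1/(C·n)) · X·Xᵀ` of a feature
matrix `X ∈ ℝ^{C×n}` with `C` channels and `n` flattened spatial positions. -/
noncomputable def GM {C n : ℕ} (X : Matrix (Fin C) (Fin n) ℝ) : Matrix (Fin C) (Fin C) ℝ :=
  (1 / ((C : ℝ) * (n : ℝ))) • (X * X.transpose)

lemma gram_key {C n : ℕ} (f g : Fin C → Fin n → ℝ) :
    ∑ a : Fin C, ∑ b : Fin C, (∑ i : Fin n, f a i * f b i) * (∑ j : Fin n, g a j * g b j)
      = ∑ i : Fin n, ∑ j : Fin n, (∑ c : Fin C, f c i * g c j) ^ 2 := by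
  simp_rw [pow_two, Finset.sum_mul, Finset.mul_sum]
  refine (Finset.sum_congr rfl fun a _ => Finset.sum_comm ..).trans ?_
  refine Finset.sum_comm.trans ?_
  refine Finset.sum_congr rfl fun i _ => ?_
  refine ((Finset.sum_congr rfl fun a _ => Finset.sum_comm).trans
    Finset.sum_comm).trans ?_
  exact Finset.sum_congr rfl fun j _ => Finset.sum_congr rfl fun a _ =>
    Finset.sum_congr rfl fun b _ => by ring

/-- Matching Gram matrices is equivalent to minimizing the MMD with the
second-order polynomial kernel `k(a,b) = ⟨a,b⟩²`: the squared Frobenius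
distance between the Gram matrices of `X` and `Y` equals `(1/C²)` times the
squared maximum mean discrepancy of the empirical distributions of their
columns under this kernel. -/
theorem gram_distance_eq_mmd {C n : ℕ} (hC : 0 < C) (hn : 0 < n)
    (X Y : Matrix (Fin C) (Fin n) ℝ) :
    ∑ a : Fin C, ∑ b : Fin C, (GM X a b - GM Y a b) ^ 2
      = 1 / (C : ℝ) ^ 2 *
          ((1 / (n : ℝ) ^ 2) *
              ∑ i : Fin n, ∑ j : Fin n, (∑ c : Fin C, X c i * X c j) ^ 2
            - (2 / (n : ℝ) ^ 2) *
              ∑ i : Fin n, ∑ j : Fin n, (∑ c : Fin C, X c i * Y c j) ^ 2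
            + (1 / (n : ℝ) ^ 2) *
              ∑ i : Fin n, ∑ j : Fin n, (∑ c : Fin C, Y c i * Y c j) ^ 2) := by
  have h1 : ∀ a b : Fin C, (GM X a b - GM Y a b) ^ 2
      = (1 / ((C : ℝ) * n)) ^ 2 *
        ((∑ i, X a i * X b i) * (∑ j, X a j * X b j)
          - 2 * ((∑ i, X a i * X b i) * (∑ j, Y a j * Y b j))
          + (∑ i, Y a i * Y b i) * (∑ j, Y a j * Y b j)) := by
    intro a b
    simp only [GM, Matrix.smul_apply, Matrix.mul_apply, Matrix.transpose_apply, smul_eq_mul]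
    ring
  simp_rw [h1, ← Finset.mul_sum]
  have E : (∑ a : Fin C, ∑ b : Fin C,
      ((∑ i, X a i * X b i) * (∑ j, X a j * X b j)
        - 2 * ((∑ i, X a i * X b i) * (∑ j, Y a j * Y b j))
        + (∑ i, Y a i * Y b i) * (∑ j, Y a j * Y b j)))
      = (∑ i : Fin n, ∑ j : Fin n, (∑ c : Fin C, X c i * X c j) ^ 2)
        - 2 * (∑ i : Fin n, ∑ j : Fin n, (∑ c : Fin C, X c i * Y c j) ^ 2)
        + (∑ i : Fin n, ∑ j : Fin n, (∑ c : Fin C, Y c i * Y c j) ^ 2) := by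
    simp_rw [Finset.sum_add_distrib, Finset.sum_sub_distrib, ← Finset.mul_sum]
    rw [gram_key X X, gram_key X Y, gram_key Y Y]
  rw [E]
  ring
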